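/- Let $H_1 \in \mathbb{F}_2^{\ell_1 \times n_1}$, $H_2 \in \mathbb{F}_2^{\ell_2 \times n_2}$, and let $k_1 = \dim\ker H_1$, $k_1^T = \dim\ker H_1^T$, $k_2 = \dim\ker H_2$, $k_2^T = \dim\ker H_2^T$. For the hypergraph product check matrices $H_X = (H_1 \otimes I_{n_2} \mid I_{\ell_1} \otimes H_2^T)$ and $H_Z = (I_{n_1} \otimes H_2 \mid H_1^T \otimes I_{\ell_2})$, the number of logical qubits $n_1 n_2 + \ell_1\ell_2 - \mathrm{rank}(H_X) - \mathrm{rank}(H_Z)$ equals $k_1 k_2 + k_1^T k_2^T$. -/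

import Mathlib

open Matrix Kronecker Module LinearMap

variable {K : Type*} [Field K]

lemma matrix_exists_CR {m n : Type*} [Fintype m] [Fintype n] [DecidableEq m] [DecidableEq n]
    (A : Matrix m n K) :
    ∃ (r : ℕ) (C : Matrix m (Fin r) K) (R : Matrix (Fin r) n K)
      (L : Matrix (Fin r) m K) (R' : Matrix n (Fin r) K),
      A.rank = r ∧ A = C * R ∧ L * C = 1 ∧ R * R' = 1 := by
  classical
  set f := A.mulVecLin with hf
  let e : (LinearMap.range f) ≃ₗ[K] (Fin A.rank → K) :=
    (Module.finBasis K (LinearMap.range f)).equivFun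
  let gC : (Fin A.rank → K) →ₗ[K] (m → K) :=
    (LinearMap.range f).subtype ∘ₗ e.symm.toLinearMap
  let gR : (n → K) →ₗ[K] (Fin A.rank → K) := e.toLinearMap ∘ₗ f.rangeRestrict
  have hcomp : gC ∘ₗ gR = f := by
    ext v
    simp [gC, gR]
  obtain ⟨l, hl⟩ := gC.exists_leftInverse_of_injective (by
    rw [LinearMap.ker_eq_bot]
    exact (LinearMap.range f).injective_subtype.comp e.symm.injective)
  obtain ⟨g, hg⟩ := gR.exists_rightInverse_of_surjective (by
    rw [LinearMap.range_eq_top]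
    exact e.surjective.comp f.surjective_rangeRestrict)
  refine ⟨A.rank, LinearMap.toMatrix' gC, LinearMap.toMatrix' gR, LinearMap.toMatrix' l,
    LinearMap.toMatrix' g, rfl, ?_, ?_, ?_⟩
  · rw [← LinearMap.toMatrix'_comp, hcomp, hf, ← Matrix.toLin'_apply', LinearMap.toMatrix'_toLin']
  · rw [← LinearMap.toMatrix'_comp, hl, LinearMap.toMatrix'_id]
  · rw [← LinearMap.toMatrix'_comp, hg, LinearMap.toMatrix'_id]

lemma rank_kron {m n p q : Type*} [Fintype m] [Fintype n] [Fintype p] [Fintype q]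
    [DecidableEq m] [DecidableEq n] [DecidableEq p] [DecidableEq q]
    (A : Matrix m n K) (B : Matrix p q K) :
    (A ⊗ₖ B).rank = A.rank * B.rank := by
  obtain ⟨r₁, C₁, R₁, L₁, R₁', hr₁, hA, hL₁, hR₁⟩ := matrix_exists_CR A
  obtain ⟨r₂, C₂, R₂, L₂, R₂', hr₂, hB, hL₂, hR₂⟩ := matrix_exists_CR B
  rw [hr₁, hr₂]
  apply le_antisymm
  · calc (A ⊗ₖ B).rank = ((C₁ ⊗ₖ C₂) * (R₁ ⊗ₖ R₂)).rank := by
          rw [← Matrix.mul_kronecker_mul, ← hA, ← hB]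
      _ ≤ (C₁ ⊗ₖ C₂).rank := Matrix.rank_mul_le_left _ _
      _ ≤ Fintype.card (Fin r₁ × Fin r₂) := Matrix.rank_le_card_width _
      _ = r₁ * r₂ := by simp
  · have key : (L₁ ⊗ₖ L₂) * (A ⊗ₖ B) * (R₁' ⊗ₖ R₂') = 1 := by
      rw [hA, hB, ← Matrix.mul_kronecker_mul, ← Matrix.mul_kronecker_mul,
        show L₁ * (C₁ * R₁) * R₁' = 1 by
          rw [← Matrix.mul_assoc, hL₁, Matrix.one_mul, hR₁],
        show L₂ * (C₂ * R₂) * R₂' = 1 by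
          rw [← Matrix.mul_assoc, hL₂, Matrix.one_mul, hR₂],
        Matrix.one_kronecker_one]
    calc r₁ * r₂ = (1 : Matrix (Fin r₁ × Fin r₂) (Fin r₁ × Fin r₂) K).rank := by
          simp
      _ = ((L₁ ⊗ₖ L₂) * (A ⊗ₖ B) * (R₁' ⊗ₖ R₂')).rank := by rw [key]
      _ ≤ ((L₁ ⊗ₖ L₂) * (A ⊗ₖ B)).rank := Matrix.rank_mul_le_left _ _
      _ ≤ (A ⊗ₖ B).rank := Matrix.rank_mul_le_right _ _

lemma range_kron_inf {m n p q : Type*} [Fintype m] [Fintype n] [Fintype p] [Fintype q]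
    [DecidableEq m] [DecidableEq n] [DecidableEq p] [DecidableEq q]
    (A : Matrix m n K) (B : Matrix p q K) :
    LinearMap.range (A ⊗ₖ (1 : Matrix p p K)).mulVecLin ⊓
      LinearMap.range ((1 : Matrix m m K) ⊗ₖ B).mulVecLin
      = LinearMap.range (A ⊗ₖ B).mulVecLin := by
  obtain ⟨r, C, R, L, R', hr, hA, hL, hR⟩ := matrix_exists_CR A
  set G := R' * L with hGdef
  have hG : A * G * A = A := by
    rw [hA, hGdef]
    calc C * R * (R' * L) * (C * R) = C * ((R * R') * ((L * C) * R)) := by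
          simp only [Matrix.mul_assoc]
      _ = C * R := by rw [hR, hL, Matrix.one_mul, Matrix.one_mul]
  apply le_antisymm
  · rintro x ⟨⟨v, hv⟩, ⟨w, hw⟩⟩
    refine ⟨(G ⊗ₖ (1 : Matrix q q K)) *ᵥ w, ?_⟩
    simp only [Matrix.mulVecLin_apply] at hv hw ⊢
    calc (A ⊗ₖ B) *ᵥ ((G ⊗ₖ (1 : Matrix q q K)) *ᵥ w)
        = (((A * G) ⊗ₖ (1 : Matrix p p K)) * ((1 : Matrix m m K) ⊗ₖ B)) *ᵥ w := by
          rw [Matrix.mulVec_mulVec, ← Matrix.mul_kronecker_mul, ← Matrix.mul_kronecker_mul,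
            Matrix.mul_one, Matrix.mul_one, Matrix.one_mul]
      _ = ((A * G) ⊗ₖ (1 : Matrix p p K)) *ᵥ x := by
          rw [← Matrix.mulVec_mulVec, hw]
      _ = (((A * G) ⊗ₖ (1 : Matrix p p K)) * (A ⊗ₖ (1 : Matrix p p K))) *ᵥ v := by
          rw [← hv, Matrix.mulVec_mulVec]
      _ = (A ⊗ₖ (1 : Matrix p p K)) *ᵥ v := by
          rw [← Matrix.mul_kronecker_mul, Matrix.one_mul, hG]
      _ = x := hv
  · refine le_inf ?_ ?_
    · have h : A ⊗ₖ B = (A ⊗ₖ (1 : Matrix p p K)) * ((1 : Matrix n n K) ⊗ₖ B) := by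
        rw [← Matrix.mul_kronecker_mul, Matrix.mul_one, Matrix.one_mul]
      rw [h, Matrix.mulVecLin_mul]
      exact LinearMap.range_comp_le_range _ _
    · have h : A ⊗ₖ B = ((1 : Matrix m m K) ⊗ₖ B) * (A ⊗ₖ (1 : Matrix q q K)) := by
        rw [← Matrix.mul_kronecker_mul, Matrix.mul_one, Matrix.one_mul]
      rw [h, Matrix.mulVecLin_mul]
      exact LinearMap.range_comp_le_range _ _

lemma rank_fromColumns_add {p m₁ m₂ : Type*} [Fintype p] [Fintype m₁] [Fintype m₂]
    (M : Matrix p m₁ K) (N : Matrix p m₂ K) :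
    (Matrix.fromCols M N).rank
      + finrank K ↑(LinearMap.range M.mulVecLin ⊓ LinearMap.range N.mulVecLin)
      = M.rank + N.rank := by
  have hsup : LinearMap.range (Matrix.fromCols M N).mulVecLin
      = LinearMap.range M.mulVecLin ⊔ LinearMap.range N.mulVecLin := by
    apply le_antisymm
    · rintro x ⟨v, rfl⟩
      have hv : v = Sum.elim (v ∘ Sum.inl) (v ∘ Sum.inr) := by
        ext (i | i) <;> rfl
      rw [Matrix.mulVecLin_apply, hv, Matrix.fromCols_mulVec_sumElim]
      exact Submodule.add_mem_sup ⟨_, rfl⟩ ⟨_, rfl⟩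
    · refine sup_le ?_ ?_
      · rintro x ⟨v, rfl⟩
        refine ⟨Sum.elim v 0, ?_⟩
        rw [Matrix.mulVecLin_apply, Matrix.fromCols_mulVec_sumElim]
        simp
      · rintro x ⟨v, rfl⟩
        refine ⟨Sum.elim 0 v, ?_⟩
        rw [Matrix.mulVecLin_apply, Matrix.fromCols_mulVec_sumElim]
        simp
  rw [Matrix.rank, hsup, Matrix.rank, Matrix.rank]
  exact Submodule.finrank_sup_add_finrank_inf_eq _ _

theorem hypergraph_product_dimension (ℓ₁ n₁ ℓ₂ n₂ : ℕ)
    (H₁ : Matrix (Fin ℓ₁) (Fin n₁) (ZMod 2))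
    (H₂ : Matrix (Fin ℓ₂) (Fin n₂) (ZMod 2)) :
    (Matrix.fromCols (H₁ ⊗ₖ (1 : Matrix (Fin n₂) (Fin n₂) (ZMod 2)))
        ((1 : Matrix (Fin ℓ₁) (Fin ℓ₁) (ZMod 2)) ⊗ₖ H₂ᵀ)).rank +
      (Matrix.fromCols ((1 : Matrix (Fin n₁) (Fin n₁) (ZMod 2)) ⊗ₖ H₂)
        (H₁ᵀ ⊗ₖ (1 : Matrix (Fin ℓ₂) (Fin ℓ₂) (ZMod 2)))).rank +
      (Module.finrank (ZMod 2) (LinearMap.ker H₁.mulVecLin) *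
          Module.finrank (ZMod 2) (LinearMap.ker H₂.mulVecLin) +
        Module.finrank (ZMod 2) (LinearMap.ker H₁ᵀ.mulVecLin) *
          Module.finrank (ZMod 2) (LinearMap.ker H₂ᵀ.mulVecLin)) =
      n₁ * n₂ + ℓ₁ * ℓ₂ := by
  classical
  -- X-side
  have hX := rank_fromColumns_add (H₁ ⊗ₖ (1 : Matrix (Fin n₂) (Fin n₂) (ZMod 2)))
    ((1 : Matrix (Fin ℓ₁) (Fin ℓ₁) (ZMod 2)) ⊗ₖ H₂ᵀ)
  rw [range_kron_inf H₁ H₂ᵀ,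
    show finrank (ZMod 2) ↥(LinearMap.range (H₁ ⊗ₖ H₂ᵀ).mulVecLin) = (H₁ ⊗ₖ H₂ᵀ).rank from rfl,
    rank_kron, rank_kron, rank_kron, Matrix.rank_one, Matrix.rank_one,
    Matrix.rank_transpose, Fintype.card_fin, Fintype.card_fin] at hX
  -- Z-side
  have hZ := rank_fromColumns_add ((1 : Matrix (Fin n₁) (Fin n₁) (ZMod 2)) ⊗ₖ H₂)
    (H₁ᵀ ⊗ₖ (1 : Matrix (Fin ℓ₂) (Fin ℓ₂) (ZMod 2)))
  rw [inf_comm, range_kron_inf H₁ᵀ H₂,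
    show finrank (ZMod 2) ↥(LinearMap.range (H₁ᵀ ⊗ₖ H₂).mulVecLin) = (H₁ᵀ ⊗ₖ H₂).rank from rfl,
    rank_kron, rank_kron, rank_kron, Matrix.rank_one, Matrix.rank_one,
    Matrix.rank_transpose, Fintype.card_fin, Fintype.card_fin] at hZ
  -- rank-nullity
  have hk₁ : H₁.rank + finrank (ZMod 2) (LinearMap.ker H₁.mulVecLin) = n₁ := by
    have h := LinearMap.finrank_range_add_finrank_ker H₁.mulVecLin
    rw [Module.finrank_pi, Fintype.card_fin] at h
    exact h
  have hk₁' : H₁.rank + finrank (ZMod 2) (LinearMap.ker H₁ᵀ.mulVecLin) = ℓ₁ := by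
    have h := LinearMap.finrank_range_add_finrank_ker H₁ᵀ.mulVecLin
    rw [Module.finrank_pi, Fintype.card_fin] at h
    rw [← Matrix.rank_transpose H₁]
    exact h
  have hk₂ : H₂.rank + finrank (ZMod 2) (LinearMap.ker H₂.mulVecLin) = n₂ := by
    have h := LinearMap.finrank_range_add_finrank_ker H₂.mulVecLin
    rw [Module.finrank_pi, Fintype.card_fin] at h
    exact h
  have hk₂' : H₂.rank + finrank (ZMod 2) (LinearMap.ker H₂ᵀ.mulVecLin) = ℓ₂ := by
    have h := LinearMap.finrank_range_add_finrank_ker H₂ᵀ.mulVecLin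
    rw [Module.finrank_pi, Fintype.card_fin] at h
    rw [← Matrix.rank_transpose H₂]
    exact h
  set rX := (Matrix.fromCols (H₁ ⊗ₖ (1 : Matrix (Fin n₂) (Fin n₂) (ZMod 2)))
    ((1 : Matrix (Fin ℓ₁) (Fin ℓ₁) (ZMod 2)) ⊗ₖ H₂ᵀ)).rank with hrX
  set rZ := (Matrix.fromCols ((1 : Matrix (Fin n₁) (Fin n₁) (ZMod 2)) ⊗ₖ H₂)
    (H₁ᵀ ⊗ₖ (1 : Matrix (Fin ℓ₂) (Fin ℓ₂) (ZMod 2)))).rank with hrZ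
  set a := H₁.rank with ha
  set b := H₂.rank with hb
  set k₁ := finrank (ZMod 2) (LinearMap.ker H₁.mulVecLin) with hkk₁
  set k₂ := finrank (ZMod 2) (LinearMap.ker H₂.mulVecLin) with hkk₂
  set k₁' := finrank (ZMod 2) (LinearMap.ker H₁ᵀ.mulVecLin) with hkk₁'
  set k₂' := finrank (ZMod 2) (LinearMap.ker H₂ᵀ.mulVecLin) with hkk₂'
  rw [← hk₂, ← hk₁'] at hX
  rw [← hk₁, ← hk₂'] at hZ
  rw [← hk₁, ← hk₁', ← hk₂, ← hk₂']
  nlinarith [hX, hZ]
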